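/- arXiv:1102.2785 — 5 statements merged into one kernel-verified Lean document; each statement's English description precedes it below -/
import Mathlib

section
/- Let S be a finite set of points in R^d, let p ∈ R^d, and for s ∈ S let n(s) denote the nearest neighbor of s within S. Then the number of points s ∈ S with d(s,p) ≤ d(s, n(s)) is bounded by the maximum possible in-degree of a vertex in a nearest neighbor graph in R^d (a constant depending only on d). -/
/-!
If `p` is at least as close to `s` as any other point of `S`, then in the triangle `p s t`
the side `st` is the longest one for every other such `t`, so the angle at `p` is at least
`π / 3` and the unit vectors pointing from `p` to `s` and to `t` are at distance at least `1`
(if `p` itself lies in `S`, its direction is `0`, which is at distance `1` from every unit vector).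
A `1`-separated family in the compact unit ball has at most as many members as a finite
`1 / 2`-net of the ball has points, which bounds the count in terms of the dimension alone.
-/

open NormedSpace Finset

section Packing

variable {X ι : Type*} [PseudoMetricSpace X]

theorem TotallyBounded.exists_card_le_of_pairwise_le_dist {K : Set X} (hK : TotallyBounded K)
    {ε : ℝ} (hε : 0 < ε) :
    ∃ N : ℕ, ∀ (s : Finset ι) (f : ι → X), (∀ i ∈ s, f i ∈ K) →
      (s : Set ι).Pairwise (fun i j => ε ≤ dist (f i) (f j)) → s.card ≤ N := by
  obtain ⟨t, ht, hKt⟩ := Metric.totallyBounded_iff.mp hK (ε / 2) (half_pos hε)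
  refine ⟨ht.toFinset.card, fun s f hfK hsep => ?_⟩
  refine card_le_card_of_forall_subsingleton (fun i y => dist (f i) y < ε / 2)
    (fun i hi => by simpa using hKt (hfK i hi)) ?_
  rintro y - i ⟨hi, hiy⟩ j ⟨hj, hjy⟩
  by_contra hne
  have : dist (f i) (f j) < ε := by
    calc dist (f i) (f j) ≤ dist (f i) y + dist (f j) y := dist_triangle_right _ _ _
      _ < ε / 2 + ε / 2 := add_lt_add hiy hjy
      _ = ε := add_halves ε
  exact (hsep hi hj hne).not_gt this

end Packing

section Normalize

variable {E : Type*} [NormedAddCommGroup E] [InnerProductSpace ℝ E]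

theorem NormedSpace.norm_normalize_le_one (x : E) : ‖normalize x‖ ≤ 1 := by
  by_cases hx : x = 0
  · simp [hx]
  · exact (norm_normalize hx).le

theorem NormedSpace.one_le_norm_normalize_sub_normalize {x y : E} (hxy : x ≠ y)
    (hx : ‖x‖ ≤ ‖x - y‖) (hy : ‖y‖ ≤ ‖x - y‖) :
    1 ≤ ‖normalize x - normalize y‖ := by
  rcases eq_or_ne x 0 with rfl | hx0
  · simp [norm_normalize (Ne.symm hxy)]
  rcases eq_or_ne y 0 with rfl | hy0
  · simp [norm_normalize hx0]
  have hxpos : 0 < ‖x‖ := norm_pos_iff.mpr hx0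
  have hypos : 0 < ‖y‖ := norm_pos_iff.mpr hy0
  -- `2 ⟪x, y⟫ = ‖x‖² + ‖y‖² - ‖x - y‖² ≤ min ‖x‖² ‖y‖²`, i.e. the angle between `x` and `y`
  -- is at least `π / 3`.
  have hinner : 2 * inner ℝ x y ≤ ‖x‖ * ‖y‖ := by
    have := norm_sub_sq_real x y
    rcases le_total ‖x‖ ‖y‖ with h | h <;> nlinarith
  have hsq : ‖normalize x - normalize y‖ ^ 2 = 2 - 2 * inner ℝ x y / (‖x‖ * ‖y‖) := by
    rw [norm_sub_sq_real, norm_normalize hx0, norm_normalize hy0, normalize, normalize,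
      real_inner_smul_left, real_inner_smul_right]
    field_simp
    ring
  have hratio : 2 * inner ℝ x y / (‖x‖ * ‖y‖) ≤ 1 :=
    (div_le_one (by positivity)).mpr hinner
  nlinarith [norm_nonneg (normalize x - normalize y)]

end Normalize

/-- The in-neighbours of `p` in the nearest neighbour graph of `S ∪ {p}`. -/
noncomputable def nearestInNeighbors {X : Type*} [PseudoMetricSpace X] [DecidableEq X]
    (S : Finset X) (p : X) : Finset X :=
  S.filter fun s => ∀ t ∈ S, t ≠ s → dist s p ≤ dist s t

theorem exists_forall_card_nearestInNeighbors_le (E : Type*) [NormedAddCommGroup E]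
    [InnerProductSpace ℝ E] [ProperSpace E] [DecidableEq E] :
    ∃ N : ℕ, ∀ (S : Finset E) (p : E), (nearestInNeighbors S p).card ≤ N := by
  obtain ⟨N, hN⟩ := (isCompact_closedBall (0 : E) 1).totallyBounded
    |>.exists_card_le_of_pairwise_le_dist (ι := E) one_pos
  refine ⟨N, fun S p => hN _ (fun s => normalize (s - p))
    (fun s _ => mem_closedBall_zero_iff.mpr (norm_normalize_le_one _)) ?_⟩
  intro s hs t ht hst
  simp only [nearestInNeighbors, coe_filter, Set.mem_ofPred_eq] at hs ht
  rw [dist_eq_norm]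
  refine one_le_norm_normalize_sub_normalize (sub_left_injective.ne hst) ?_ ?_
  · simpa [dist_eq_norm] using hs.2 t ht.1 (Ne.symm hst)
  · simpa [dist_eq_norm, norm_sub_rev] using ht.2 s hs.1 hst

/-- Let `S` be a finite set of points in `ℝ^d`, `p ∉ S`, and for `s ∈ S` let `nn s`
denote the nearest neighbor of `s` within `S`. Then the number of points `s ∈ S` with
`dist s p ≤ dist s (nn s)` is bounded by a constant `C d` depending only on the
dimension `d` (the maximum possible in-degree of a vertex in a nearest neighbor
graph in `ℝ^d`). -/
theorem indegree_bound_per_layer :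
    ∃ C : ℕ → ℕ, ∀ (d : ℕ) (S : Finset (EuclideanSpace ℝ (Fin d))),
      2 ≤ S.card →
      ∀ p : EuclideanSpace ℝ (Fin d), p ∉ S →
      -- all pairwise distances among `S ∪ {p}` are distinct
      (∀ a ∈ insert p S, ∀ b ∈ insert p S, ∀ u ∈ insert p S, ∀ v ∈ insert p S,
        a ≠ b → u ≠ v → dist a b = dist u v → (a = u ∧ b = v) ∨ (a = v ∧ b = u)) →
      ∀ nn : EuclideanSpace ℝ (Fin d) → EuclideanSpace ℝ (Fin d),
      (∀ s ∈ S, nn s ∈ S ∧ nn s ≠ s ∧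
        ∀ t ∈ S, t ≠ s → dist s (nn s) ≤ dist s t) →
      (S.filter fun s => dist s p ≤ dist s (nn s)).card ≤ C d := by
  have hbound d := exists_forall_card_nearestInNeighbors_le (EuclideanSpace ℝ (Fin d))
  refine ⟨fun d => (hbound d).choose, fun d S _ p _ _ nn hnn => ?_⟩
  refine (card_le_card fun s hs => ?_).trans ((hbound d).choose_spec S p)
  obtain ⟨hsS, hsp⟩ := mem_filter.mp hs
  exact mem_filter.mpr ⟨hsS, fun t ht hts => hsp.trans ((hnn s hsS).2.2 t ht hts)⟩
end

section
/- For every k ≥ 0 there exists a set U_k of 2^k points on the real line such that for every radii assignment r : U_k → R_{>0} whose induced symmetric communication graph is connected, some point of R is within distance r(s) of at least k−1 distinct sensors s (i.e., the receiver-based interference is at least k−1). -/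
open scoped Classical

/-- The hierarchical point set: `Uset (k+1)` is two copies of `Uset k` at distance `4^(k+1)`. -/
noncomputable def Uset : ℕ → Finset ℝ
  | 0 => {0}
  | (k+1) => Uset k ∪ (Uset k).image (· + 4^(k+1))

/-- The diameter of `Uset k`. -/
noncomputable def Dd : ℕ → ℝ
  | 0 => 0
  | (k+1) => Dd k + 4^(k+1)

lemma Dd_nonneg (k : ℕ) : 0 ≤ Dd k := by
  induction k with
  | zero => simp [Dd]
  | succ k ih =>
    have h4 : (0:ℝ) ≤ 4^(k+1) := by positivity
    simp only [Dd]; linarith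

lemma Dd_le (k : ℕ) : 2 * Dd k ≤ 4^(k+1) := by
  induction k with
  | zero => norm_num [Dd]
  | succ k ih =>
    have h4 : (0:ℝ) ≤ 4^(k+1) := by positivity
    have : (4:ℝ)^(k+2) = 4 * 4^(k+1) := by ring
    simp only [Dd]; linarith

lemma Dd_lt (k : ℕ) : Dd k < 4^(k+1) := by
  have h1 := Dd_le k
  have h4 : (0:ℝ) < 4^(k+1) := by positivity
  linarith [Dd_nonneg k]

lemma Uset_bounds (k : ℕ) : ∀ x ∈ Uset k, 0 ≤ x ∧ x ≤ Dd k := by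
  induction k with
  | zero => intro x hx; simp [Uset] at hx; simp [hx, Dd]
  | succ k ih =>
    intro x hx
    have h4 : (0:ℝ) ≤ 4^(k+1) := by positivity
    simp only [Uset, Finset.mem_union, Finset.mem_image] at hx
    rcases hx with hx | ⟨y, hy, rfl⟩
    · obtain ⟨h1, h2⟩ := ih x hx
      exact ⟨h1, by simp only [Dd]; linarith⟩
    · obtain ⟨h1, h2⟩ := ih y hy
      constructor
      · linarith
      · simp only [Dd]; linarith

lemma zero_mem_Uset (k : ℕ) : (0:ℝ) ∈ Uset k := by
  induction k with
  | zero => simp [Uset]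
  | succ k ih => simp only [Uset, Finset.mem_union]; exact Or.inl ih

lemma Uset_card (k : ℕ) : (Uset k).card = 2 ^ k := by
  induction k with
  | zero => simp [Uset]
  | succ k ih =>
    have hinj : Function.Injective (· + (4:ℝ)^(k+1)) := add_left_injective _
    have hdisj : Disjoint (Uset k) ((Uset k).image (· + 4^(k+1))) := by
      rw [Finset.disjoint_left]
      intro x hx hx'
      simp only [Finset.mem_image] at hx'
      obtain ⟨y, hy, rfl⟩ := hx'
      obtain ⟨hy1, hy2⟩ := Uset_bounds k y hy
      obtain ⟨hx1, hx2⟩ := Uset_bounds k _ hx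
      have := Dd_lt k
      linarith
    rw [Uset, Finset.card_union_of_disjoint hdisj, Finset.card_image_of_injective _ hinj, ih]
    ring

lemma crossing {α : Type*} {R : α → α → Prop} {C : Finset α} {u v : α}
    (h : Relation.ReflTransGen R u v) : u ∈ C → v ∉ C →
    ∃ a b, a ∈ C ∧ b ∉ C ∧ R a b := by
  induction h with
  | refl => intro hu hv; exact absurd hu hv
  | @tail b c hub hbc ih =>
    intro hu hv
    by_cases hb : b ∈ C
    · exact ⟨b, c, hb, hv, hbc⟩
    · exact ih hu hb

lemma main_lemma (k : ℕ) : ∀ (t : ℝ) (big : Finset ℝ) (r : ℝ → ℝ),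
    ((Uset k).image (· + t)) ⊆ big →
    (∀ u ∈ big, ∀ v ∈ big, Relation.ReflTransGen
        (fun a b => a ∈ big ∧ b ∈ big ∧ a ≠ b ∧ dist a b ≤ min (r a) (r b)) u v) →
    (∀ x ∈ big, x ∉ (Uset k).image (· + t) →
        ∀ c ∈ (Uset k).image (· + t), Dd k ≤ dist x c) →
    (∃ x ∈ big, x ∉ (Uset k).image (· + t)) →
    ∃ p ∈ (Uset k).image (· + t), ∃ V : Finset ℝ,
      V ⊆ (Uset k).image (· + t) ∧ V.card = k ∧ ∀ s ∈ V, dist s p ≤ r s := by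
  induction k with
  | zero =>
    intro t big r h1 _ _ _
    refine ⟨0 + t, ?_, ∅, by simp, by simp, by simp⟩
    simp [Uset]
  | succ k ih =>
    intro t big r h1 hconn hsep hne
    set A := (Uset k).image (· + t) with hA
    set B := (Uset k).image (· + (4^(k+1) + t)) with hB
    set C := (Uset (k+1)).image (· + t) with hCdef
    have h4 : (0:ℝ) < 4^(k+1) := by positivity
    have hC : C = A ∪ B := by
      ext x
      simp only [hCdef, hA, hB, Uset, Finset.image_union, Finset.mem_union,
        Finset.image_image, Finset.mem_image, Function.comp]
      constructor
      · rintro (h | ⟨y, hy, rfl⟩)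
        · exact Or.inl h
        · exact Or.inr ⟨y, hy, by ring⟩
      · rintro (h | ⟨y, hy, rfl⟩)
        · exact Or.inl h
        · exact Or.inr ⟨y, hy, by ring⟩
    have hAbnd : ∀ x ∈ A, t ≤ x ∧ x ≤ t + Dd k := by
      intro x hx
      simp only [hA, Finset.mem_image] at hx
      obtain ⟨y, hy, rfl⟩ := hx
      obtain ⟨h1', h2'⟩ := Uset_bounds k y hy
      constructor <;> linarith
    have hBbnd : ∀ x ∈ B, t + 4^(k+1) ≤ x ∧ x ≤ t + 4^(k+1) + Dd k := by
      intro x hx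
      simp only [hB, Finset.mem_image] at hx
      obtain ⟨y, hy, rfl⟩ := hx
      obtain ⟨h1', h2'⟩ := Uset_bounds k y hy
      constructor <;> linarith
    have hCbnd : ∀ x ∈ C, t ≤ x ∧ x ≤ t + Dd (k+1) := by
      intro x hx
      simp only [hCdef, Finset.mem_image] at hx
      obtain ⟨y, hy, rfl⟩ := hx
      obtain ⟨h1', h2'⟩ := Uset_bounds (k+1) y hy
      constructor <;> [linarith; · simp only [Dd] at h2' ⊢; linarith]
    have hABdisj : ∀ x ∈ A, x ∉ B := by
      intro x hx hx'
      obtain ⟨ha1, ha2⟩ := hAbnd x hx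
      obtain ⟨hb1, hb2⟩ := hBbnd x hx'
      have := Dd_lt k
      linarith
    have hAsubC : A ⊆ C := by rw [hC]; exact Finset.subset_union_left
    have hBsubC : B ⊆ C := by rw [hC]; exact Finset.subset_union_right
    have hDle := Dd_le k
    have hDnn := Dd_nonneg k
    -- find an edge leaving C
    obtain ⟨x0, hx0big, hx0C⟩ := hne
    have ht : t ∈ C := by
      simp only [hCdef, Finset.mem_image]
      exact ⟨0, zero_mem_Uset (k+1), by ring⟩
    obtain ⟨a, b, haC, hbC, ha_big, hb_big, hab_ne, hab_dist⟩ :=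
      crossing (hconn t (h1 ht) x0 hx0big) ht hx0C
    have hra : Dd (k+1) ≤ r a := by
      have h5 := hsep b hb_big hbC a haC
      rw [dist_comm] at h5
      calc Dd (k+1) ≤ dist a b := h5
        _ ≤ min (r a) (r b) := hab_dist
        _ ≤ r a := min_le_left _ _
    have hcover_a : ∀ p ∈ C, dist a p ≤ r a := by
      intro p hp
      obtain ⟨hp1, hp2⟩ := hCbnd p hp
      obtain ⟨ha1, ha2⟩ := hCbnd a haC
      rw [Real.dist_eq, abs_le]
      constructor <;> [linarith; linarith]
    have hDk1 : Dd (k+1) = Dd k + 4^(k+1) := rfl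
    rw [hC, Finset.mem_union] at haC
    rcases haC with haA | haB
    · -- a ∈ A, recurse into B
      obtain ⟨p, hpB, V, hVsub, hVcard, hVcov⟩ := ih (4^(k+1) + t) big r
        (hBsubC.trans h1) hconn
        (by
          intro x hx hxB c hc
          by_cases hxA : x ∈ A
          · obtain ⟨h1', h2'⟩ := hAbnd x hxA
            obtain ⟨h3', h4'⟩ := hBbnd c (hc)
            rw [Real.dist_eq]
            have : c - x ≥ 4^(k+1) - Dd k := by linarith
            rw [abs_sub_comm, abs_of_nonneg (by linarith)]
            linarith
          · have hxC : x ∉ C := by rw [hC, Finset.mem_union]; tauto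
            have := hsep x hx hxC c (hBsubC hc)
            linarith
        )
        ⟨a, ha_big, hABdisj a haA⟩
      refine ⟨p, hBsubC hpB, insert a V, ?_, ?_, ?_⟩
      · intro s hs
        rw [Finset.mem_insert] at hs
        rcases hs with rfl | hs
        · exact hC ▸ hAsubC haA
        · exact hC ▸ hBsubC (hVsub hs)
      · rw [Finset.card_insert_of_notMem (fun h => hABdisj a haA (hVsub h)), hVcard]
      · intro s hs
        rw [Finset.mem_insert] at hs
        rcases hs with rfl | hs
        · exact hcover_a p (hBsubC hpB)
        · exact hVcov s hs
    · -- a ∈ B, recurse into A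
      obtain ⟨p, hpA, V, hVsub, hVcard, hVcov⟩ := ih t big r
        (hAsubC.trans h1) hconn
        (by
          intro x hx hxA c hc
          by_cases hxB : x ∈ B
          · obtain ⟨h1', h2'⟩ := hBbnd x hxB
            obtain ⟨h3', h4'⟩ := hAbnd c hc
            rw [Real.dist_eq, abs_of_nonneg (by linarith)]
            linarith
          · have hxC : x ∉ C := by rw [hC, Finset.mem_union]; tauto
            have := hsep x hx hxC c (hAsubC hc)
            linarith
        )
        ⟨a, ha_big, fun h => hABdisj a h haB⟩
      refine ⟨p, hAsubC hpA, insert a V, ?_, ?_, ?_⟩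
      · intro s hs
        rw [Finset.mem_insert] at hs
        rcases hs with rfl | hs
        · exact hC ▸ hBsubC haB
        · exact hC ▸ hAsubC (hVsub hs)
      · rw [Finset.card_insert_of_notMem (fun h => hABdisj a (hVsub h) haB), hVcard]
      · intro s hs
        rw [Finset.mem_insert] at hs
        rcases hs with rfl | hs
        · exact hcover_a p (hAsubC hpA)
        · exact hVcov s hs

/-- For every `k ≥ 0` there exists a set `U` of `2^k` points on the real line such
that for every radii assignment `r : U → ℝ_{>0}` whose induced symmetric
communication graph is connected, some point `p` of `ℝ` is within distance `r s`
of at least `k - 1` distinct sensors `s` (i.e., the receiver-based interference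
is at least `k - 1`). -/
theorem interference_lower_bound (k : ℕ) :
    ∃ U : Finset ℝ, U.card = 2 ^ k ∧
      ∀ r : ℝ → ℝ, (∀ s ∈ U, 0 < r s) →
        (∀ u ∈ U, ∀ v ∈ U,
          Relation.ReflTransGen
            (fun a b => a ∈ U ∧ b ∈ U ∧ a ≠ b ∧ dist a b ≤ min (r a) (r b)) u v) →
        ∃ p : ℝ, k - 1 ≤ (U.filter fun s => dist s p ≤ r s).card := by
  refine ⟨Uset k, Uset_card k, ?_⟩
  intro r _ hconn
  cases k with
  | zero => exact ⟨0, by simp⟩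
  | succ m =>
    have h4 : (0:ℝ) < 4^(m+1) := by positivity
    have hDle := Dd_le m
    have hDnn := Dd_nonneg m
    have himg : ∀ x : ℝ, x ∈ (Uset m).image (· + (0:ℝ)) ↔ x ∈ Uset m := by
      intro x; simp
    have h1 : ((Uset m).image (· + (0:ℝ))) ⊆ Uset (m+1) := by
      intro x hx
      rw [himg] at hx
      simp only [Uset, Finset.mem_union]
      exact Or.inl hx
    obtain ⟨p, hp, V, hVsub, hVcard, hVcov⟩ := main_lemma m 0 (Uset (m+1)) r h1 hconn
      (by
        intro x hx hxm c hc
        rw [himg] at hxm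
        simp only [Uset, Finset.mem_union] at hx
        rcases hx with hx | hx
        · exact absurd hx hxm
        · simp only [Finset.mem_image] at hx
          obtain ⟨y, hy, rfl⟩ := hx
          obtain ⟨hy1, hy2⟩ := Uset_bounds m y hy
          rw [himg] at hc
          obtain ⟨hc1, hc2⟩ := Uset_bounds m c hc
          rw [Real.dist_eq, abs_of_nonneg (by linarith)]
          linarith
      )
      (by
        refine ⟨(0:ℝ) + 4^(m+1), ?_, ?_⟩
        · simp only [Uset, Finset.mem_union, Finset.mem_image]
          exact Or.inr ⟨0, zero_mem_Uset m, rfl⟩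
        · rw [himg]
          intro h
          obtain ⟨h1', h2'⟩ := Uset_bounds m _ h
          have := Dd_lt m
          linarith
      )
    refine ⟨p, ?_⟩
    have hsub : V ⊆ (Uset (m+1)).filter fun s => dist s p ≤ r s := by
      intro s hs
      rw [Finset.mem_filter]
      exact ⟨h1 (hVsub hs), hVcov s hs⟩
    calc m + 1 - 1 = m := rfl
      _ = V.card := hVcard.symm
      _ ≤ _ := Finset.card_le_card hsub
end

section
/- With leaders chosen as above, the subgraph of G_u induced on the leader set L_c together with the within-sub-cube adjacencies makes L_c a connected dominating structure: any two leaders of the same cluster c are connected by a path in G_u all of whose intermediate hops go between points at distance at most R_min and pass only through leaders of c. -/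
/-- Membership of `x` in the sub-cube indexed by `k : Fin d → Fin d` of the cube of
side `R` with lowest corner `a`, partitioned into `d^d` sub-cubes of side `R/d`. -/
def inSubcube {d : ℕ} (a : EuclideanSpace ℝ (Fin d)) (R : ℝ) (k : Fin d → Fin d)
    (x : EuclideanSpace ℝ (Fin d)) : Prop :=
  ∀ i, a i + ((k i : ℕ) : ℝ) * (R / d) ≤ x i ∧
    x i ≤ a i + (((k i : ℕ) : ℝ) + 1) * (R / d)

/-!
Every point of the bucket lies in some sub-cube, and a sub-cube of side `R/d` has diameter
`√d · R/d ≤ R`, so leaders sharing a sub-cube are adjacent. Walk along a path of `G_u[c]`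
between two leaders, keeping track of a sub-cube of the current point: each edge of the path
crossing from sub-cube `k` to `k'` is shadowed by a leader edge from `k` to `k'`, and within
`k'` we may jump to any leader, so the leader reached so far stays linked to every leader of
the current sub-cube.
-/

open Relation

namespace Relation.ReflTransGen

variable {α ι : Type*}

theorem restrict_component {r : α → α → Prop} (hr : ∀ u v, r u v → r v u) {x₀ y y' : α}
    (hy : ReflTransGen r x₀ y) (hy' : ReflTransGen r x₀ y') :
    ReflTransGen (fun u v => ReflTransGen r x₀ u ∧ ReflTransGen r x₀ v ∧ r u v) y y' := by
  have from_root : ∀ {z}, ReflTransGen r x₀ z →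
      ReflTransGen (fun u v => ReflTransGen r x₀ u ∧ ReflTransGen r x₀ v ∧ r u v) x₀ z := by
    intro z hz
    induction hz with
    | refl => rfl
    | tail hxu huv ih => exact ih.tail ⟨hxu, hxu.tail huv, huv⟩
  have : Std.Symm (fun u v => ReflTransGen r x₀ u ∧ ReflTransGen r x₀ v ∧ r u v) :=
    ⟨fun _ _ ⟨hu, hv, huv⟩ => ⟨hv, hu, hr _ _ huv⟩⟩
  exact (symm (from_root hy)).trans (from_root hy')

section Cells

variable {r s : α → α → Prop} {mem : ι → α → Prop} {L : Set α}

theorem exists_cell_linked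
    (h_cell : ∀ k p q, p ∈ L → q ∈ L → mem k p → mem k q → s p q)
    (h_step : ∀ x y k, r x y → mem k x →
      ∃ k', mem k' y ∧ ∃ u ∈ L, ∃ v ∈ L, mem k u ∧ mem k' v ∧ s u v)
    {x y : α} (hxy : ReflTransGen r x y) (hx : x ∈ L) {k : ι} (hxk : mem k x) :
    ∃ k', mem k' y ∧ ∀ q ∈ L, mem k' q → ReflTransGen s x q := by
  induction hxy with
  | refl => exact ⟨k, hxk, fun q hq hqk => .single (h_cell k x q hx hq hxk hqk)⟩
  | tail _ hzw ih =>
    obtain ⟨k₁, hzk₁, hlinked⟩ := ih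
    obtain ⟨k₂, hwk₂, u, hu, v, hv, huk₁, hvk₂, huv⟩ := h_step _ _ k₁ hzw hzk₁
    exact ⟨k₂, hwk₂, fun q hq hqk₂ =>
      ((hlinked u hu huk₁).tail huv).tail (h_cell k₂ v q hv hq hvk₂ hqk₂)⟩

theorem of_cells
    (h_cell : ∀ k p q, p ∈ L → q ∈ L → mem k p → mem k q → s p q)
    (h_step : ∀ x y k, r x y → mem k x →
      ∃ k', mem k' y ∧ ∃ u ∈ L, ∃ v ∈ L, mem k u ∧ mem k' v ∧ s u v)
    {x y : α} (hxy : ReflTransGen r x y) (hx : x ∈ L) (hy : y ∈ L) {k : ι} (hxk : mem k x) :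
    ReflTransGen s x y :=
  have ⟨_, hyk', hlinked⟩ := exists_cell_linked h_cell h_step hxy hx hxk
  hlinked y hy hyk'

end Cells

end Relation.ReflTransGen

theorem exists_lt_mul_le_le_succ_mul {n : ℕ} (hn : 0 < n) {s t : ℝ} (hs : 0 < s)
    (ht₀ : 0 ≤ t) (ht : t ≤ n * s) : ∃ j < n, j * s ≤ t ∧ t ≤ (j + 1) * s := by
  have hfloor : (⌊t / s⌋₊ : ℝ) * s ≤ t := (le_div_iff₀ hs).1 (Nat.floor_le (by positivity))
  rcases lt_or_ge ⌊t / s⌋₊ n with hlt | hge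
  · refine ⟨⌊t / s⌋₊, hlt, hfloor, ?_⟩
    exact (div_le_iff₀ hs).1 (Nat.lt_floor_add_one (t / s)).le
  · refine ⟨n - 1, by omega, ?_, ?_⟩
    · calc ((n - 1 : ℕ) : ℝ) * s ≤ ⌊t / s⌋₊ * s := by gcongr; omega
        _ ≤ t := hfloor
    · rwa [Nat.cast_sub hn, Nat.cast_one, sub_add_cancel]

section Subcube

variable {d : ℕ} {a x y : EuclideanSpace ℝ (Fin d)} {R : ℝ}

theorem exists_inSubcube (hR : 0 < R) (hx : ∀ i, a i ≤ x i ∧ x i ≤ a i + R) :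
    ∃ k, inSubcube a R k x := by
  have hcoord : ∀ i : Fin d, ∃ j : Fin d,
      a i + (j : ℝ) * (R / d) ≤ x i ∧ x i ≤ a i + ((j : ℝ) + 1) * (R / d) := by
    intro i
    have hd : 0 < d := i.pos
    obtain ⟨j, hj, hlo, hhi⟩ := exists_lt_mul_le_le_succ_mul hd (s := R / d)
      (by positivity) (sub_nonneg.2 (hx i).1)
      (by rw [mul_div_cancel₀ R (by positivity)]; linarith [(hx i).2])
    exact ⟨⟨j, hj⟩, by linarith, by linarith⟩
  choose k hk using hcoord
  exact ⟨k, hk⟩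

theorem dist_le_of_inSubcube (hR : 0 ≤ R) {k : Fin d → Fin d} (hx : inSubcube a R k x)
    (hy : inSubcube a R k y) : dist x y ≤ R := by
  have hcoord : ∀ i, dist (x i) (y i) ^ 2 ≤ (R / d) ^ 2 := by
    intro i
    rw [Real.dist_eq, sq_abs, sq_le_sq, abs_of_nonneg (div_nonneg hR d.cast_nonneg)]
    obtain ⟨hx₁, hx₂⟩ := hx i
    obtain ⟨hy₁, hy₂⟩ := hy i
    rw [add_mul, one_mul] at hx₂ hy₂
    exact abs_sub_le_iff.2 ⟨by linarith, by linarith⟩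
  have hcard : (d : ℝ) * (R / d) ^ 2 ≤ R ^ 2 := by
    rcases Nat.eq_zero_or_pos d with rfl | hd
    · simp [sq_nonneg]
    · calc (d : ℝ) * (R / d) ^ 2 = R ^ 2 / d := by field_simp
        _ ≤ R ^ 2 := div_le_self (sq_nonneg R) (by exact_mod_cast hd)
  calc dist x y = √(∑ i, dist (x i) (y i) ^ 2) := EuclideanSpace.dist_eq x y
    _ ≤ √(R ^ 2) := by
      gcongr
      calc ∑ i, dist (x i) (y i) ^ 2 ≤ ∑ _i : Fin d, (R / d) ^ 2 :=
            Finset.sum_le_sum fun i _ => hcoord i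
        _ = d * (R / d) ^ 2 := by simp
        _ ≤ R ^ 2 := hcard
    _ = R := Real.sqrt_sq hR

end Subcube

theorem leaders_connected_general (d : ℕ) (Rmin : ℝ) (hR : 0 < Rmin)
    (a : EuclideanSpace ℝ (Fin d))
    (S SB : Finset (EuclideanSpace ℝ (Fin d)))
    -- `SB` is the set of points of `S` inside the bucket `B`
    (hSB : ∀ x, x ∈ SB ↔ x ∈ S ∧ ∀ i, a i ≤ x i ∧ x i ≤ a i + Rmin)
    (c : Finset (EuclideanSpace ℝ (Fin d)))
    -- `c` is a connected component of `G_u` restricted to `SB`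
    (hc : ∃ x₀ ∈ SB, ∀ y, y ∈ c ↔ y ∈ SB ∧
      Relation.ReflTransGen
        (fun u v => u ∈ SB ∧ v ∈ SB ∧ u ≠ v ∧ dist u v ≤ Rmin) x₀ y)
    (L : Finset (EuclideanSpace ℝ (Fin d))) (hLc : L ⊆ c)
    -- construction of the leaders: for each pair of sub-cubes joined by an edge of
    -- `G_u[c]`, `L` contains the endpoints of one such edge
    (hL : ∀ k₁ k₂ : Fin d → Fin d,
      (∃ u ∈ c, ∃ v ∈ c, u ≠ v ∧ dist u v ≤ Rmin ∧
        inSubcube a Rmin k₁ u ∧ inSubcube a Rmin k₂ v) →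
      ∃ u' ∈ L, ∃ v' ∈ L, inSubcube a Rmin k₁ u' ∧ inSubcube a Rmin k₂ v' ∧
        dist u' v' ≤ Rmin) :
    ∀ ℓ ∈ L, ∀ ℓ' ∈ L,
      Relation.ReflTransGen
        (fun u v => u ∈ L ∧ v ∈ L ∧ dist u v ≤ Rmin) ℓ ℓ' := by
  intro ℓ hℓ ℓ' hℓ'
  obtain ⟨x₀, -, hc⟩ := hc
  have in_bucket : ∀ x ∈ c, ∀ i, a i ≤ x i ∧ x i ≤ a i + Rmin :=
    fun x hx => ((hSB x).1 ((hc x).1 hx).1).2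
  have path_in_c : ReflTransGen
      (fun u v => u ∈ c ∧ v ∈ c ∧ u ≠ v ∧ dist u v ≤ Rmin) ℓ ℓ' := by
    have hsymm : ∀ u v, u ∈ SB ∧ v ∈ SB ∧ u ≠ v ∧ dist u v ≤ Rmin →
        v ∈ SB ∧ u ∈ SB ∧ v ≠ u ∧ dist v u ≤ Rmin :=
      fun u v ⟨hu, hv, huv, h⟩ => ⟨hv, hu, huv.symm, dist_comm u v ▸ h⟩
    refine ReflTransGen.mono ?_ _ _ (ReflTransGen.restrict_component hsymm
      ((hc ℓ).1 (hLc hℓ)).2 ((hc ℓ').1 (hLc hℓ')).2)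
    rintro u v ⟨hu, hv, huSB, hvSB, huv⟩
    exact ⟨(hc u).2 ⟨huSB, hu⟩, (hc v).2 ⟨hvSB, hv⟩, huv⟩
  obtain ⟨k, hk⟩ := exists_inSubcube hR (in_bucket ℓ (hLc hℓ))
  refine path_in_c.of_cells (mem := inSubcube a Rmin) (L := L)
    (fun k p q hp hq hpk hqk => ⟨hp, hq, dist_le_of_inSubcube hR.le hpk hqk⟩) ?_ hℓ hℓ' hk
  rintro x y k ⟨hx, hy, hxy, hdist⟩ hxk
  obtain ⟨k', hyk'⟩ := exists_inSubcube hR (in_bucket y hy)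
  obtain ⟨u, hu, v, hv, huk, hvk', huv⟩ := hL k k' ⟨x, hx, y, hy, hxy, hdist, hxk, hyk'⟩
  exact ⟨k', hyk', u, hu, v, hv, huk, hvk', hu, hv, huv⟩

/-- With leaders chosen as in the construction (for every pair of sub-cubes joined
by an edge of `G_u[c]`, the leader set contains the two endpoints of such an edge,
lying in those sub-cubes and at distance at most `R_min`), the leader set `L` of a
cluster `c` is connected: any two leaders of `c` are joined by a path all of whose
hops go between leaders of `c` at distance at most `R_min`. -/
theorem leaders_connected (d : ℕ) (hd : 1 ≤ d) (Rmin : ℝ) (hR : 0 < Rmin)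
    (a : EuclideanSpace ℝ (Fin d))
    (S SB : Finset (EuclideanSpace ℝ (Fin d)))
    -- `SB` is the set of points of `S` inside the bucket `B`
    (hSB : ∀ x, x ∈ SB ↔ x ∈ S ∧ ∀ i, a i ≤ x i ∧ x i ≤ a i + Rmin)
    (c : Finset (EuclideanSpace ℝ (Fin d)))
    -- `c` is a connected component of `G_u` restricted to `SB`
    (hc : ∃ x₀ ∈ SB, ∀ y, y ∈ c ↔ y ∈ SB ∧
      Relation.ReflTransGen
        (fun u v => u ∈ SB ∧ v ∈ SB ∧ u ≠ v ∧ dist u v ≤ Rmin) x₀ y)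
    (L : Finset (EuclideanSpace ℝ (Fin d))) (hLc : L ⊆ c)
    -- construction of the leaders: for each pair of sub-cubes joined by an edge of
    -- `G_u[c]`, `L` contains the endpoints of one such edge
    (hL : ∀ k₁ k₂ : Fin d → Fin d,
      (∃ u ∈ c, ∃ v ∈ c, u ≠ v ∧ dist u v ≤ Rmin ∧
        inSubcube a Rmin k₁ u ∧ inSubcube a Rmin k₂ v) →
      ∃ u' ∈ L, ∃ v' ∈ L, inSubcube a Rmin k₁ u' ∧ inSubcube a Rmin k₂ v' ∧
        dist u' v' ≤ Rmin) :
    ∀ ℓ ∈ L, ∀ ℓ' ∈ L,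
      Relation.ReflTransGen
        (fun u v => u ∈ L ∧ v ∈ L ∧ dist u v ≤ Rmin) ℓ ℓ' :=
  leaders_connected_general d Rmin hR a S SB hSB c hc L hLc hL
end

section
/- Let r be a radii assignment on finite S ⊂ R^d with interference at most i, and let r̄(s) = min(r(s), R_min) for all s except a set X of modified sensors where r̄(s) = R_min, such that each bucket of side R_min contains at most K sensors of X. Then the interference of r̄ is at most 3^d · (i + K). -/
open scoped Classical

/-! Once radii are capped at `Rmin`, every sensor reaching `p` lies in one of the `3 ^ d` grid
cells adjacent to the cell of `p`. Inside one cell, an unmodified sensor reaching `p` under `rbar`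
also reaches it under `r`, so there are at most `i` of them, and at most `K` modified ones. -/

open Finset

/-- The bucket of the paper: the index of the grid cube of side `a` containing `x`. -/
noncomputable def gridCell {d : ℕ} (a : ℝ) (x : EuclideanSpace ℝ (Fin d)) : Fin d → ℤ :=
  fun j => ⌊x j / a⌋

lemma Int.floor_div_le_floor_div_add_one {a x y : ℝ} (ha : 0 < a) (h : x ≤ y + a) :
    ⌊x / a⌋ ≤ ⌊y / a⌋ + 1 := by
  rw [← Int.floor_add_one]
  gcongr
  rwa [div_add_one ha.ne', div_le_div_iff_of_pos_right ha]

lemma gridCell_mem_piFinset_Icc {d : ℕ} {a : ℝ} (ha : 0 < a) {x y : EuclideanSpace ℝ (Fin d)}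
    (h : dist x y ≤ a) :
    gridCell a x ∈ Fintype.piFinset fun j => Icc (gridCell a y j - 1) (gridCell a y j + 1) := by
  rw [Fintype.mem_piFinset]
  intro j
  have hj : |x j - y j| ≤ a := (PiLp.dist_apply_le x y j).trans h
  rw [mem_Icc, sub_le_iff_le_add]
  constructor <;> exact Int.floor_div_le_floor_div_add_one ha (by linarith [abs_le.mp hj])

lemma card_piFinset_Icc_sub_one_add_one {d : ℕ} (c : Fin d → ℤ) :
    #(Fintype.piFinset fun j => Icc (c j - 1) (c j + 1)) = 3 ^ d := by
  have h3 (j : Fin d) : (c j + 1 + 1 - (c j - 1)).toNat = 3 := by omega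
  simp only [Fintype.card_piFinset, Int.card_Icc, h3, prod_const, card_univ, Fintype.card_fin]

lemma card_filter_dist_le_add_card_of_le_outside {α ι : Type*} [PseudoMetricSpace α]
    [DecidableEq ι]
    (S X : Finset α) (r r' : α → ℝ) (hr : ∀ s ∈ S, s ∉ X → r' s ≤ r s)
    (cell : α → ι) (p : α) (k : ι) :
    #{s ∈ {s ∈ S | dist s p ≤ r' s} | cell s = k} ≤
      #{s ∈ S | dist s p ≤ r s} + #{s ∈ X | cell s = k} := by
  refine (card_le_card fun s hs => ?_).trans (card_union_le _ _)
  simp only [mem_filter, mem_union] at hs ⊢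
  obtain ⟨⟨hsS, hsp⟩, hsk⟩ := hs
  by_cases hsX : s ∈ X
  · exact Or.inr ⟨hsX, hsk⟩
  · exact Or.inl ⟨hsS, hsp.trans (hr s hsS hsX)⟩

theorem capped_interference_bound_general (d : ℕ) (Rmin : ℝ) (hR : 0 < Rmin)
    (S X : Finset (EuclideanSpace ℝ (Fin d)))
    (r : EuclideanSpace ℝ (Fin d) → ℝ) (i K : ℕ)
    -- `r` has interference at most `i`
    (hi : ∀ p : EuclideanSpace ℝ (Fin d),
      (S.filter fun s => dist s p ≤ r s).card ≤ i)
    -- each bucket of the side-`Rmin` grid contains at most `K` sensors of `X`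
    (hK : ∀ k : Fin d → ℤ,
      (X.filter fun s => ∀ j, ⌊s j / Rmin⌋ = k j).card ≤ K)
    (rbar : EuclideanSpace ℝ (Fin d) → ℝ)
    (hrbar : ∀ s ∈ S, rbar s = if s ∈ X then Rmin else min (r s) Rmin) :
    ∀ p : EuclideanSpace ℝ (Fin d),
      (S.filter fun s => dist s p ≤ rbar s).card ≤ 3 ^ d * (i + K) := by
  intro p
  have hrbar_le_Rmin : ∀ s ∈ S, rbar s ≤ Rmin := fun s hs => by
    rw [hrbar s hs]; split_ifs <;> simp
  have hrbar_le_r : ∀ s ∈ S, s ∉ X → rbar s ≤ r s := fun s hs hsX => by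
    simp [hrbar s hs, hsX]
  have hcell : ∀ s ∈ S.filter fun s => dist s p ≤ rbar s, gridCell Rmin s ∈
      Fintype.piFinset fun j => Icc (gridCell Rmin p j - 1) (gridCell Rmin p j + 1) := by
    intro s hs
    rw [mem_filter] at hs
    exact gridCell_mem_piFinset_Icc hR (hs.2.trans (hrbar_le_Rmin s hs.1))
  have hfiber : ∀ k ∈ Fintype.piFinset fun j =>
      Icc (gridCell Rmin p j - 1) (gridCell Rmin p j + 1),
      #{s ∈ S.filter fun s => dist s p ≤ rbar s | gridCell Rmin s = k} ≤ i + K := fun k _ =>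
    (card_filter_dist_le_add_card_of_le_outside S X r rbar hrbar_le_r _ p k).trans
      (add_le_add (hi p) (by simpa only [gridCell, funext_iff] using hK k))
  calc _ ≤ (i + K) * _ := card_le_mul_card_image_of_maps_to hcell _ hfiber
    _ = 3 ^ d * (i + K) := by rw [card_piFinset_Icc_sub_one_add_one, mul_comm]

/-- Let `r` be a radii assignment on finite `S ⊂ ℝ^d` with interference at most `i`,
and let `r̄ s = min (r s) R_min` for all `s` except a set `X` of modified sensors where
`r̄ s = R_min`, such that each bucket of side `R_min` contains at most `K` sensors of
`X`. Then the interference of `r̄` is at most `3^d * (i + K)`. -/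
theorem capped_interference_bound (d : ℕ) (Rmin : ℝ) (hR : 0 < Rmin)
    (S X : Finset (EuclideanSpace ℝ (Fin d))) (hXS : X ⊆ S)
    (r : EuclideanSpace ℝ (Fin d) → ℝ) (i K : ℕ)
    -- `r` has interference at most `i`
    (hi : ∀ p : EuclideanSpace ℝ (Fin d),
      (S.filter fun s => dist s p ≤ r s).card ≤ i)
    -- each bucket of the side-`Rmin` grid contains at most `K` sensors of `X`
    (hK : ∀ k : Fin d → ℤ,
      (X.filter fun s => ∀ j, ⌊s j / Rmin⌋ = k j).card ≤ K)
    (rbar : EuclideanSpace ℝ (Fin d) → ℝ)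
    (hrbar : ∀ s ∈ S, rbar s = if s ∈ X then Rmin else min (r s) Rmin) :
    ∀ p : EuclideanSpace ℝ (Fin d),
      (S.filter fun s => dist s p ≤ rbar s).card ≤ 3 ^ d * (i + K) :=
  capped_interference_bound_general d Rmin hR S X r i K hi hK rbar hrbar
end

section
/- Let G_r be a connected symmetric communication graph for assignment r on S, and define r̄(s) = min(r(s), R_min) except r̄(s) = R_min on a set X ⊆ S. Suppose every two sensors u, u' with r̄(u) = r̄(u') = R_min can communicate through the graph G_{r̄}. Then G_{r̄} is connected. -/
open scoped Classical

/-- Connectivity (reachability) in the symmetric communication graph of the radii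
assignment `ρ` on `S`: edge `st` iff `min (ρ s) (ρ t) ≥ dist s t`. -/
def symReach {d : ℕ} (S : Finset (EuclideanSpace ℝ (Fin d)))
    (ρ : EuclideanSpace ℝ (Fin d) → ℝ) :
    EuclideanSpace ℝ (Fin d) → EuclideanSpace ℝ (Fin d) → Prop :=
  Relation.ReflTransGen (fun u v => u ∈ S ∧ v ∈ S ∧ u ≠ v ∧ dist u v ≤ min (ρ u) (ρ v))

/-!
Capping radii at `R_min` can only delete an edge `uv` of `G_r` whose length exceeds `R_min`.
Both endpoints of such an edge had radius at least that length, so both get capped radius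
exactly `R_min`, and by hypothesis they are still joined by a path of `G_{r̄}`. Replacing every
deleted edge of a `G_r`-path by such a path gives a `G_{r̄}`-path.
-/

section CappedRadius

variable {P : Type*} {r rbar : P → ℝ} {R t : ℝ} {s : P} {p : Prop} [Decidable p]

theorem le_capped_of_le (hs : rbar s = if p then R else min (r s) R)
    (hr : t ≤ r s) (hR : t ≤ R) : t ≤ rbar s := by
  rw [hs]
  split_ifs
  · exact hR
  · exact le_min hr hR

theorem capped_eq_of_lt_of_le (hs : rbar s = if p then R else min (r s) R)
    (hR : R < t) (hr : t ≤ r s) : rbar s = R := by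
  rw [hs]
  split_ifs
  · rfl
  · exact min_eq_right (hR.trans_le hr).le

end CappedRadius

theorem symReach_capped_of_adj {d : ℕ} {R : ℝ} {S X : Finset (EuclideanSpace ℝ (Fin d))}
    {r rbar : EuclideanSpace ℝ (Fin d) → ℝ}
    (hrbar : ∀ s ∈ S, rbar s = if s ∈ X then R else min (r s) R)
    (hcap : ∀ u ∈ S, ∀ u' ∈ S, rbar u = R → rbar u' = R → symReach S rbar u u')
    {b c : EuclideanSpace ℝ (Fin d)} (hb : b ∈ S) (hc : c ∈ S) (hbc : b ≠ c)
    (hd : dist b c ≤ min (r b) (r c)) : symReach S rbar b c := by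
  obtain ⟨hrb, hrc⟩ := le_min_iff.mp hd
  rcases le_or_gt (dist b c) R with hR | hR
  · exact .single ⟨hb, hc, hbc, le_min (le_capped_of_le (hrbar b hb) hrb hR)
      (le_capped_of_le (hrbar c hc) hrc hR)⟩
  · exact hcap b hb c hc (capped_eq_of_lt_of_le (hrbar b hb) hR hrb)
      (capped_eq_of_lt_of_le (hrbar c hc) hR hrc)

theorem capped_connectivity_general (d : ℕ) (Rmin : ℝ)
    (S X : Finset (EuclideanSpace ℝ (Fin d)))
    (r rbar : EuclideanSpace ℝ (Fin d) → ℝ)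
    (hrbar : ∀ s ∈ S, rbar s = if s ∈ X then Rmin else min (r s) Rmin)
    -- `G_r` is connected
    (hconn : ∀ u ∈ S, ∀ v ∈ S, symReach S r u v)
    -- capped sensors can communicate with each other in `G_{r̄}`
    (hcap : ∀ u ∈ S, ∀ u' ∈ S, rbar u = Rmin → rbar u' = Rmin →
      symReach S rbar u u') :
    ∀ u ∈ S, ∀ v ∈ S, symReach S rbar u v := by
  intro u hu v hv
  exact (hconn u hu v hv).lift' id fun b c ⟨hb, hc, hbc, hd⟩ =>
    symReach_capped_of_adj hrbar hcap hb hc hbc hd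

/-- Let `G_r` be a connected symmetric communication graph for assignment `r` on `S`,
and define `r̄ s = min (r s) R_min` except `r̄ s = R_min` on a set `X ⊆ S`. Suppose
every two sensors `u`, `u'` with `r̄ u = r̄ u' = R_min` can communicate through the
graph `G_{r̄}`. Then `G_{r̄}` is connected. -/
theorem capped_connectivity (d : ℕ) (Rmin : ℝ) (hRmin : 0 < Rmin)
    (S X : Finset (EuclideanSpace ℝ (Fin d))) (hXS : X ⊆ S)
    (r rbar : EuclideanSpace ℝ (Fin d) → ℝ)
    (hrbar : ∀ s ∈ S, rbar s = if s ∈ X then Rmin else min (r s) Rmin)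
    -- `G_r` is connected
    (hconn : ∀ u ∈ S, ∀ v ∈ S, symReach S r u v)
    -- capped sensors can communicate with each other in `G_{r̄}`
    (hcap : ∀ u ∈ S, ∀ u' ∈ S, rbar u = Rmin → rbar u' = Rmin →
      symReach S rbar u u') :
    ∀ u ∈ S, ∀ v ∈ S, symReach S rbar u v :=
  capped_connectivity_general d Rmin S X r rbar hrbar hconn hcap
end
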